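/- arXiv:2212.13476 — 3 statements merged into one kernel-verified Lean document; each statement's English description precedes it below -/
import Mathlib

section
/- Two quaternions a and b are similar (i.e., there exists a nonzero quaternion λ with a = λ b λ⁻¹) if and only if Re(a) = Re(b) and |a| = |b|. -/
private lemma quat_re_mul_comm (x y : Quaternion ℝ) : (x*y).re = (y*x).re := by
  simp [Quaternion.re_mul]; ring

private lemma quat_key (a b l : Quaternion ℝ) (hl : l ≠ 0) (h : a * l = l * b) :
    a = l * b * l⁻¹ := by
  rw [mul_assoc] at *
  rw [← mul_assoc, eq_mul_inv_iff_mul_eq₀ hl]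
  exact h

/-- Two quaternions are similar (conjugate by a nonzero quaternion) iff they have
the same real part and the same norm. -/
theorem quaternion_similar_iff (a b : Quaternion ℝ) :
    (∃ l : Quaternion ℝ, l ≠ 0 ∧ a = l * b * l⁻¹) ↔ (a.re = b.re ∧ ‖a‖ = ‖b‖) := by
  constructor
  · rintro ⟨l, hl, rfl⟩
    constructor
    · rw [mul_assoc, quat_re_mul_comm, mul_assoc, inv_mul_cancel₀ hl, mul_one]
    · rw [norm_mul, norm_mul, norm_inv, mul_comm, ← mul_assoc,
        inv_mul_cancel₀ (norm_ne_zero_iff.mpr hl), one_mul]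
  · rintro ⟨h1, h2⟩
    have hn : Quaternion.normSq a = Quaternion.normSq b := by
      rw [Quaternion.normSq_eq_norm_mul_self, Quaternion.normSq_eq_norm_mul_self, h2]
    rw [Quaternion.normSq_def', Quaternion.normSq_def'] at hn
    by_cases hab : a = star b
    · -- a = star b
      by_cases him : a.imI = 0 ∧ a.imJ = 0 ∧ a.imK = 0
      · refine ⟨1, one_ne_zero, ?_⟩
        have : a = b := by
          ext <;> simp_all [Quaternion.re_star, Quaternion.imI_star, Quaternion.imJ_star,
            Quaternion.imK_star, hab]
        simp [this]
      · -- choose pure λ orthogonal to im a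
        by_cases hij : a.imI = 0 ∧ a.imJ = 0
        · -- imK ≠ 0, take λ = i
          have hk : a.imK ≠ 0 := by tauto
          refine ⟨⟨0, 1, 0, 0⟩, ?_, ?_⟩
          · intro h; apply one_ne_zero (α := ℝ); exact congrArg QuaternionAlgebra.imI h
          · apply quat_key _ _ _ (by intro h; exact one_ne_zero (α := ℝ) (congrArg QuaternionAlgebra.imI h))
            have hb : b = star a := by rw [hab, star_star]
            ext <;> simp [hb, Quaternion.re_mul (R := ℝ) (b := ⟨0, 1, 0, 0⟩), Quaternion.imI_mul (R := ℝ) (b := ⟨0, 1, 0, 0⟩),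
              Quaternion.imJ_mul (R := ℝ) (b := ⟨0, 1, 0, 0⟩), Quaternion.imK_mul (R := ℝ) (b := ⟨0, 1, 0, 0⟩),
              Quaternion.re_mul (R := ℝ) (a := ⟨0, 1, 0, 0⟩), Quaternion.imI_mul (R := ℝ) (a := ⟨0, 1, 0, 0⟩),
              Quaternion.imJ_mul (R := ℝ) (a := ⟨0, 1, 0, 0⟩), Quaternion.imK_mul (R := ℝ) (a := ⟨0, 1, 0, 0⟩), hij.1, hij.2]
        · refine ⟨⟨0, -a.imJ, a.imI, 0⟩, ?_, ?_⟩
          · intro h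
            apply hij
            constructor
            · have := congrArg QuaternionAlgebra.imJ h; simpa [Quaternion.imJ_zero] using this
            · have := congrArg QuaternionAlgebra.imI h; simpa [Quaternion.imI_zero] using this
          · apply quat_key
            · intro h
              apply hij
              constructor
              · have := congrArg QuaternionAlgebra.imJ h; simpa [Quaternion.imJ_zero] using this
              · have := congrArg QuaternionAlgebra.imI h; simpa [Quaternion.imI_zero] using this
            · have hb : b = star a := by rw [hab, star_star]
              ext <;> simp [hb, Quaternion.re_mul (R := ℝ) (b := ⟨0, -a.imJ, a.imI, 0⟩), Quaternion.imI_mul (R := ℝ) (b := ⟨0, -a.imJ, a.imI, 0⟩),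
                Quaternion.imJ_mul (R := ℝ) (b := ⟨0, -a.imJ, a.imI, 0⟩), Quaternion.imK_mul (R := ℝ) (b := ⟨0, -a.imJ, a.imI, 0⟩),
                Quaternion.re_mul (R := ℝ) (a := ⟨0, -a.imJ, a.imI, 0⟩), Quaternion.imI_mul (R := ℝ) (a := ⟨0, -a.imJ, a.imI, 0⟩),
                Quaternion.imJ_mul (R := ℝ) (a := ⟨0, -a.imJ, a.imI, 0⟩), Quaternion.imK_mul (R := ℝ) (a := ⟨0, -a.imJ, a.imI, 0⟩)] <;> ring
    · refine ⟨a - star b, sub_ne_zero.mpr hab, ?_⟩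
      apply quat_key _ _ _ (sub_ne_zero.mpr hab)
      rw [h1] at hn
      ext <;>
        simp only [Quaternion.re_mul, Quaternion.imI_mul, Quaternion.imJ_mul, Quaternion.imK_mul,
          Quaternion.re_sub, Quaternion.imI_sub, Quaternion.imJ_sub, Quaternion.imK_sub,
          Quaternion.re_star, Quaternion.imI_star, Quaternion.imJ_star, Quaternion.imK_star] <;>
        rw [h1] <;>
        first
        | ring1
        | linear_combination -hn
end

section
/- Every ℝ-algebra automorphism of the quaternions ℍ is inner: there exists a nonzero quaternion a such that f(q) = a q a⁻¹ for all q. -/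
open Quaternion

noncomputable def QI : Quaternion ℝ := ⟨0,1,0,0⟩
noncomputable def QJ : Quaternion ℝ := ⟨0,0,1,0⟩
noncomputable def QK : Quaternion ℝ := ⟨0,0,0,1⟩
@[simp] private lemma QI_re : QI.re = 0 := rfl
@[simp] private lemma QI_imI : QI.imI = 1 := rfl
@[simp] private lemma QI_imJ : QI.imJ = 0 := rfl
@[simp] private lemma QI_imK : QI.imK = 0 := rfl
@[simp] private lemma QJ_re : QJ.re = 0 := rfl
@[simp] private lemma QJ_imI : QJ.imI = 0 := rfl
@[simp] private lemma QJ_imJ : QJ.imJ = 1 := rfl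
@[simp] private lemma QJ_imK : QJ.imK = 0 := rfl
@[simp] private lemma QK_re : QK.re = 0 := rfl
@[simp] private lemma QK_imI : QK.imI = 0 := rfl
@[simp] private lemma QK_imJ : QK.imJ = 0 := rfl
@[simp] private lemma QK_imK : QK.imK = 1 := rfl

private lemma QII : QI * QI = -1 := by
  ext <;> simp [Quaternion.re_mul, Quaternion.imI_mul, Quaternion.imJ_mul, Quaternion.imK_mul]
private lemma QJJ : QJ * QJ = -1 := by
  ext <;> simp [Quaternion.re_mul, Quaternion.imI_mul, Quaternion.imJ_mul, Quaternion.imK_mul]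
private lemma QKK : QK * QK = -1 := by
  ext <;> simp [Quaternion.re_mul, Quaternion.imI_mul, Quaternion.imJ_mul, Quaternion.imK_mul]
private lemma QIJ : QI * QJ = QK := by
  ext <;> simp [Quaternion.re_mul, Quaternion.imI_mul, Quaternion.imJ_mul, Quaternion.imK_mul]
private lemma QJI : QJ * QI = -QK := by
  ext <;> simp [Quaternion.re_mul, Quaternion.imI_mul, Quaternion.imJ_mul, Quaternion.imK_mul]
private lemma QJK : QJ * QK = QI := by
  ext <;> simp [Quaternion.re_mul, Quaternion.imI_mul, Quaternion.imJ_mul, Quaternion.imK_mul]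
private lemma QKJ : QK * QJ = -QI := by
  ext <;> simp [Quaternion.re_mul, Quaternion.imI_mul, Quaternion.imJ_mul, Quaternion.imK_mul]
private lemma QKI : QK * QI = QJ := by
  ext <;> simp [Quaternion.re_mul, Quaternion.imI_mul, Quaternion.imJ_mul, Quaternion.imK_mul]
private lemma QIK : QI * QK = -QJ := by
  ext <;> simp [Quaternion.re_mul, Quaternion.imI_mul, Quaternion.imJ_mul, Quaternion.imK_mul]

private lemma four_identity (A B C : Quaternion ℝ) :
    ((1:Quaternion ℝ) - A*1*QI - B*1*QJ - C*1*QK)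
    - (QI - A*QI*QI - B*QI*QJ - C*QI*QK) * QI
    - (QJ - A*QJ*QI - B*QJ*QJ - C*QJ*QK) * QJ
    - (QK - A*QK*QI - B*QK*QJ - C*QK*QK) * QK = ((4:ℝ) : Quaternion ℝ) := by
  ext <;>
    simp [Quaternion.re_mul, Quaternion.imI_mul, Quaternion.imJ_mul,
      Quaternion.imK_mul] <;> ring

/-- Every `ℝ`-algebra automorphism of the quaternions is inner. -/
theorem quaternion_automorphism_inner (f : Quaternion ℝ ≃ₐ[ℝ] Quaternion ℝ) :
    ∃ a : Quaternion ℝ, a ≠ 0 ∧ ∀ q : Quaternion ℝ, f q = a * q * a⁻¹ := by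
  classical
  set A := f QI with hA
  set B := f QJ with hB
  set C := f QK with hC
  have hmap : ∀ x y z : Quaternion ℝ, x * y = z → f x * f y = f z := by
    intro x y z h; rw [← map_mul, h]
  have hAA : A * A = -1 := by rw [hA, ← map_mul, QII, map_neg, map_one]
  have hAB : A * B = C := by rw [hA, hB, hC, ← map_mul, QIJ]
  have hAC : A * C = -B := by rw [hA, hB, hC, ← map_mul, QIK, map_neg]
  have hBA : B * A = -C := by rw [hA, hB, hC, ← map_mul, QJI, map_neg]
  have hBB : B * B = -1 := by rw [hB, ← map_mul, QJJ, map_neg, map_one]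
  have hBC : B * C = A := by rw [hA, hB, hC, ← map_mul, QJK]
  have hCA : C * A = B := by rw [hA, hB, hC, ← map_mul, QKI]
  have hCB : C * B = -A := by rw [hA, hB, hC, ← map_mul, QKJ, map_neg]
  have hCC : C * C = -1 := by rw [hC, ← map_mul, QKK, map_neg, map_one]
  set T : Quaternion ℝ → Quaternion ℝ :=
    fun x => x - A*x*QI - B*x*QJ - C*x*QK with hT
  -- intertwining on basis elements
  have hIw : ∀ x, A * T x = T x * QI := by
    intro x
    have e1 : A * T x = A*x - (A*A)*x*QI - (A*B)*x*QJ - (A*C)*x*QK := by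
      simp only [hT]; noncomm_ring
    have e2 : T x * QI = x*QI - A*x*(QI*QI) - B*x*(QJ*QI) - C*x*(QK*QI) := by
      simp only [hT]; noncomm_ring
    rw [e1, e2, hAA, hAB, hAC, QII, QJI, QKI]
    noncomm_ring
  have hJw : ∀ x, B * T x = T x * QJ := by
    intro x
    have e1 : B * T x = B*x - (B*A)*x*QI - (B*B)*x*QJ - (B*C)*x*QK := by
      simp only [hT]; noncomm_ring
    have e2 : T x * QJ = x*QJ - A*x*(QI*QJ) - B*x*(QJ*QJ) - C*x*(QK*QJ) := by
      simp only [hT]; noncomm_ring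
    rw [e1, e2, hBA, hBB, hBC, QIJ, QJJ, QKJ]
    noncomm_ring
  have hKw : ∀ x, C * T x = T x * QK := by
    intro x
    have e1 : C * T x = C*x - (C*A)*x*QI - (C*B)*x*QJ - (C*C)*x*QK := by
      simp only [hT]; noncomm_ring
    have e2 : T x * QK = x*QK - A*x*(QI*QK) - B*x*(QJ*QK) - C*x*(QK*QK) := by
      simp only [hT]; noncomm_ring
    rw [e1, e2, hCA, hCB, hCC, QIK, QJK, QKK]
    noncomm_ring
  -- general intertwining
  have hgen : ∀ x q, f q * T x = T x * q := by
    intro x q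
    have hq : q = ((q.re : ℝ) : Quaternion ℝ) + q.imI • QI + q.imJ • QJ + q.imK • QK := by
      ext <;> simp
    have hfr : f ((q.re : ℝ) : Quaternion ℝ) = ((q.re : ℝ) : Quaternion ℝ) := by
      simpa [QuaternionAlgebra.coe_algebraMap] using f.commutes q.re
    conv_lhs => rw [hq]
    conv_rhs => rw [hq]
    rw [map_add, map_add, map_add, map_smul, map_smul, map_smul, hfr, ← hA, ← hB, ← hC]
    rw [add_mul, add_mul, add_mul, mul_add, mul_add, mul_add]
    rw [smul_mul_assoc, smul_mul_assoc, smul_mul_assoc, mul_smul_comm, mul_smul_comm,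
      mul_smul_comm]
    rw [hIw x, hJw x, hKw x, Quaternion.coe_commutes]
  -- nonvanishing
  have hex : T 1 ≠ 0 ∨ T QI ≠ 0 ∨ T QJ ≠ 0 ∨ T QK ≠ 0 := by
    by_contra h
    push_neg at h
    obtain ⟨h1, h2, h3, h4⟩ := h
    have id4 : T 1 - T QI * QI - T QJ * QJ - T QK * QK = ((4:ℝ) : Quaternion ℝ) := by
      simp only [hT]; exact four_identity A B C
    rw [h1, h2, h3, h4] at id4
    simp only [zero_mul, sub_zero, zero_sub, neg_zero] at id4
    have h4ne : ((4:ℝ) : Quaternion ℝ) ≠ 0 := by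
      intro h
      have := Quaternion.coe_injective (h.trans (Quaternion.coe_zero).symm)
      norm_num at this
    exact h4ne id4.symm
  -- conclude
  have final : ∀ x, T x ≠ 0 → ∃ a : Quaternion ℝ, a ≠ 0 ∧ ∀ q, f q = a * q * a⁻¹ := by
    intro x hx
    refine ⟨T x, hx, fun q => ?_⟩
    rw [← hgen x q, mul_assoc, mul_inv_cancel₀ hx, mul_one]
  rcases hex with h | h | h | h
  · exact final 1 h
  · exact final QI h
  · exact final QJ h
  · exact final QK h
end

section
/- In the ball model of quaternionic hyperbolic space, for points p₁ = (u, 0') and p₂ = (w, 0') on the quaternionic axis Σ = {(z, 0')} and any point p = (z, z') in the ball, if cosh d(p', p₁) = cosh d(p', p₂) where p' = (z, 0') is the orthogonal projection of p onto Σ, then cosh d(p, p₁) = cosh d(p, p₂). Consequently the bisector B(p₁,p₂) equals the preimage under orthogonal projection onto Σ of the bisector of p₁, p₂ in Σ. -/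
open scoped BigOperators

noncomputable section

/-- Hermitian product of lifts `(p,1)`, `(q,1)` of ball points of `H^n_ℚ`
(first coordinate separated): `⟨P,Q⟩ = p̄₁q₁ + Σ p̄'ᵢq'ᵢ - 1`. -/
def hermB {n : ℕ} (p q : Quaternion ℝ × (Fin n → Quaternion ℝ)) : Quaternion ℝ :=
  star p.1 * q.1 + (∑ i, star (p.2 i) * q.2 i) - 1

/-- Squared Euclidean norm of a ball point. -/
def nrmSq {n : ℕ} (p : Quaternion ℝ × (Fin n → Quaternion ℝ)) : ℝ :=
  ‖p.1‖ ^ 2 + ∑ i, ‖p.2 i‖ ^ 2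

/-- `cosh²` of the hyperbolic distance between two ball points:
`|⟨P,Q⟩|² / (⟨P,P⟩⟨Q,Q⟩)`. -/
def coshSq {n : ℕ} (p q : Quaternion ℝ × (Fin n → Quaternion ℝ)) : ℝ :=
  ‖hermB p q‖ ^ 2 / ((nrmSq p - 1) * (nrmSq q - 1))

lemma coshSq_spec {n : ℕ} (z u : Quaternion ℝ) (z' : Fin n → Quaternion ℝ) :
    coshSq (z, z') (u, 0) =
      ‖star z * u - 1‖ ^ 2 / ((‖z‖ ^ 2 + ∑ i, ‖z' i‖ ^ 2 - 1) * (‖u‖ ^ 2 - 1)) := by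
  simp [coshSq, hermB, nrmSq]

lemma cancel_aux {a b c d t : ℝ} (ht : t ≠ 0) : a / (t * c) = b / (t * d) ↔ a / c = b / d := by
  rw [mul_comm t c, mul_comm t d, ← div_div, ← div_div, div_left_inj' ht]

lemma key_iff {n : ℕ} (u w z : Quaternion ℝ) (z' : Fin n → Quaternion ℝ)
    (hp : ‖z‖ ^ 2 + ∑ i, ‖z' i‖ ^ 2 < 1) :
    (coshSq ((z, 0) : Quaternion ℝ × (Fin n → Quaternion ℝ)) (u, 0) =
        coshSq ((z, 0) : Quaternion ℝ × (Fin n → Quaternion ℝ)) (w, 0) ↔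
      coshSq ((z, z') : Quaternion ℝ × (Fin n → Quaternion ℝ)) (u, 0) =
        coshSq ((z, z') : Quaternion ℝ × (Fin n → Quaternion ℝ)) (w, 0)) := by
  have hsum : (0:ℝ) ≤ ∑ i, ‖z' i‖ ^ 2 := Finset.sum_nonneg fun i _ => by positivity
  have ht : ‖z‖ ^ 2 - 1 ≠ 0 := by nlinarith
  have hs : ‖z‖ ^ 2 + ∑ i, ‖z' i‖ ^ 2 - 1 ≠ 0 := by nlinarith
  rw [coshSq_spec, coshSq_spec, coshSq_spec, coshSq_spec]
  simp only [Pi.zero_apply, norm_zero, ne_eq, OfNat.ofNat_ne_zero, not_false_eq_true,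
    zero_pow, Finset.sum_const_zero, add_zero]
  rw [cancel_aux ht, cancel_aux hs]

/-- Mostow decomposition of bisectors: if the projection `p' = (z,0')` of
`p = (z,z')` onto the quaternionic spine `Σ = {(z,0')}` is equidistant from
`p₁ = (u,0')` and `p₂ = (w,0')`, then so is `p`.  Consequently the bisector
`B(p₁,p₂)` is the preimage under the orthogonal projection onto `Σ` of the
bisector of `p₁, p₂` in `Σ`. -/
theorem bisector_mostow (n : ℕ) (u w z : Quaternion ℝ) (z' : Fin n → Quaternion ℝ)
    (hu : ‖u‖ < 1) (hw : ‖w‖ < 1)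
    (hp : ‖z‖ ^ 2 + ∑ i, ‖z' i‖ ^ 2 < 1) :
    (coshSq ((z, 0) : Quaternion ℝ × (Fin n → Quaternion ℝ)) (u, 0) =
        coshSq ((z, 0) : Quaternion ℝ × (Fin n → Quaternion ℝ)) (w, 0) →
      coshSq ((z, z') : Quaternion ℝ × (Fin n → Quaternion ℝ)) (u, 0) =
        coshSq ((z, z') : Quaternion ℝ × (Fin n → Quaternion ℝ)) (w, 0)) ∧
    {p : Quaternion ℝ × (Fin n → Quaternion ℝ) |
        nrmSq p < 1 ∧ coshSq p (u, 0) = coshSq p (w, 0)} =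
      {p : Quaternion ℝ × (Fin n → Quaternion ℝ) |
        nrmSq p < 1 ∧
          coshSq ((p.1, 0) : Quaternion ℝ × (Fin n → Quaternion ℝ)) (u, 0) =
            coshSq ((p.1, 0) : Quaternion ℝ × (Fin n → Quaternion ℝ)) (w, 0)} := by
  refine ⟨(key_iff u w z z' hp).mp, ?_⟩
  ext p
  simp only [Set.mem_setOf_eq]
  constructor
  · rintro ⟨h1, h2⟩
    refine ⟨h1, ?_⟩
    have hk := key_iff u w p.1 p.2 (by simpa [nrmSq] using h1)
    rw [Prod.mk.eta] at hk
    exact hk.mpr h2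
  · rintro ⟨h1, h2⟩
    refine ⟨h1, ?_⟩
    have hk := key_iff u w p.1 p.2 (by simpa [nrmSq] using h1)
    rw [Prod.mk.eta] at hk
    exact hk.mp h2
end
end
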